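/- Let v be an inner vertex of a branch decomposition T with children v1 and v2, let (Φ,Ψ) be a shape for v, and let P denote the set of pairs of shapes (Φ1,Ψ1) for v1 and (Φ2,Ψ2) for v2 such that (Φ,Ψ), (Φ1,Ψ1), (Φ2,Ψ2) are linked shapes. Then the set X̂_v(Φ,Ψ) of assignments from X_v to D of shape (Φ,Ψ) is the disjoint union, over all ((Φ1,Ψ1),(Φ2,Ψ2)) ∈ P, of the sets { τ1 ∪ τ2 : τ1 ∈ X̂_{v1}(Φ1,Ψ1), τ2 ∈ X̂_{v2}(Φ2,Ψ2) }. -/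

import Mathlib

/-!
Constraint bounds are additive over the disjoint variable sets of the two children, and
truncation at `γ` is compatible with this addition: `min (min a γ + min b γ) γ = min (a + b) γ`.
So an assignment `τ` of shape `(Φ, Ψ)` at `v` has a shape at each child, namely `Φᵢ = C̄ᵢ/τ`
with `Ψᵢ` given by (L2), (L3); its outer part is realised by `τ` on the sibling together with a
witness of `Ψ` outside `X_v`. Conversely linked child shapes recombine, the conditions (L*)
guaranteeing that `∈`-constraints never see a truncated value. Since the linked pair is
recovered from `τ`, the union is disjoint.
-/

open Finset

/-- A (translated) separable system with variable type `V`, constraint type `C` and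
finite domain `D`.  The constraint set is `C = Cin ∪ Cge` (disjointly), where `Cin`
is the set of constraints of type `∈` (with target set `Γ c` whose largest element
is the threshold `γ c`) and `Cge` is the set of constraints of type `≥` (with
threshold `γ c`).  Every constraint `c` has nonnegative summands `g c x : D → ℕ`. -/
structure SepSystem (V C D : Type) where
  /-- the summand functions `g^c_x : D → ℤ≥0` -/
  g : C → V → D → ℕ
  /-- the thresholds `γ^c` -/
  γ : C → ℕ
  /-- the target sets `Γ^c` for constraints in `C^∈` -/
  Γ : C → Finset ℕ
  /-- the set of constraints of type `∈` -/
  Cin : Finset C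
  /-- the set of constraints of type `≥` -/
  Cge : Finset C
  /-- `C^∈` and `C^≥` are disjoint -/
  disj : Disjoint Cin Cge
  /-- every constraint is in `C^∈ ∪ C^≥` -/
  cover : ∀ c, c ∈ Cin ∨ c ∈ Cge
  /-- for `c ∈ C^∈`, `γ^c` belongs to `Γ^c` … -/
  gammaMem : ∀ c ∈ Cin, γ c ∈ Γ c
  /-- … and is its largest element -/
  gammaMax : ∀ c ∈ Cin, ∀ a ∈ Γ c, a ≤ γ c

namespace SepSystem

variable {V C D : Type} [DecidableEq V] [DecidableEq C] [Fintype V] [Fintype C]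

/-- The constraint bound `cb^c(τ)` of the assignment `τ` restricted to `X'`. -/
def cb (S : SepSystem V C D) (X' : Finset V) (τ : V → D) (c : C) : ℕ :=
  ∑ x ∈ X', S.g c x (τ x)

/-- The map `C'/τ` (for `τ` restricted to `X'`), encoded as the function `C → ℕ`
that vanishes outside `C'`. -/
def cdiv (S : SepSystem V C D) (C' : Finset C) (X' : Finset V) (τ : V → D) : C → ℕ :=
  fun c => if c ∈ C' then min (S.cb X' τ c) (S.γ c) else 0

/-- The projection `proj(C', X') = { C'/τ : τ : X' → D }`. -/
def proj (S : SepSystem V C D) (C' : Finset C) (X' : Finset V) : Set (C → ℕ) :=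
  { f | ∃ τ : V → D, f = S.cdiv C' X' τ }

end SepSystem
namespace SepSystem

variable {V C D : Type} [DecidableEq V] [DecidableEq C] [Fintype V] [Fintype C]

/-- `τ` (restricted to `X_v`) has shape `(Φ, Ψ)` at a vertex `v` with variables `Xv`
and constraints `Cv`: conditions (S1), (S1*), (S2∈), (S2≥). -/
def HasShape (S : SepSystem V C D) (Xv : Finset V) (Cv : Finset C)
    (Φ Ψ : C → ℕ) (τ : V → D) : Prop :=
  (∀ c ∈ Cvᶜ, Φ c = min (S.cb Xv τ c) (S.γ c)) ∧
  (∀ c ∈ Cvᶜ ∩ S.Cin, S.cb Xv τ c ≤ S.γ c) ∧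
  (∀ c ∈ Cv ∩ S.Cin, Ψ c + S.cb Xv τ c ∈ S.Γ c) ∧
  (∀ c ∈ Cv ∩ S.Cge, S.γ c ≤ Ψ c + S.cb Xv τ c)

end SepSystem
namespace SepSystem

variable {V C D : Type} [DecidableEq V] [DecidableEq C] [Fintype V] [Fintype C]

/-- `(Φ,Ψ)`, `(Φ1,Ψ1)`, `(Φ2,Ψ2)` are linked shapes for an inner vertex `v`
(variables `Xv1 ∪ Xv2`, constraints `Cv1 ∪ Cv2`) with children `v1` and `v2`:
they are shapes, they satisfy (L1*), (L2*), (L3*) and the equations (L1), (L2), (L3). -/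
def Linked (S : SepSystem V C D) (Xv1 Xv2 : Finset V) (Cv1 Cv2 : Finset C)
    (Φ Ψ Φ1 Ψ1 Φ2 Ψ2 : C → ℕ) : Prop :=
  Ψ ∈ S.proj (Cv1 ∪ Cv2) (Xv1 ∪ Xv2)ᶜ ∧
  Φ1 ∈ S.proj Cv1ᶜ Xv1 ∧
  Φ2 ∈ S.proj Cv2ᶜ Xv2 ∧
  Φ ∈ S.proj (Cv1 ∪ Cv2)ᶜ (Xv1 ∪ Xv2) ∧
  Ψ1 ∈ S.proj Cv1 Xv1ᶜ ∧
  Ψ2 ∈ S.proj Cv2 Xv2ᶜ ∧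
  (∀ c ∈ (Cv1 ∪ Cv2)ᶜ ∩ S.Cin, Φ1 c + Φ2 c ≤ S.γ c) ∧
  (∀ c ∈ Cv1 ∩ S.Cin, Ψ c + Φ2 c ≤ S.γ c) ∧
  (∀ c ∈ Cv2 ∩ S.Cin, Ψ c + Φ1 c ≤ S.γ c) ∧
  (∀ c ∈ (Cv1 ∪ Cv2)ᶜ, Φ c = min (Φ1 c + Φ2 c) (S.γ c)) ∧
  (∀ c ∈ Cv1, Ψ1 c = min (Ψ c + Φ2 c) (S.γ c)) ∧
  (∀ c ∈ Cv2, Ψ2 c = min (Ψ c + Φ1 c) (S.γ c))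

end SepSystem

namespace SepSystem

variable {V C D : Type} [DecidableEq V] [DecidableEq C] [Fintype V] [Fintype C]

/-- The set `{ τ1 ∪ τ2 : τ1 ∈ X̂_{v1}(Φ1,Ψ1), τ2 ∈ X̂_{v2}(Φ2,Ψ2) }` associated with a
pair of shapes `p = ((Φ1,Ψ1),(Φ2,Ψ2))` for the children `v1`, `v2`. -/
def combSet (S : SepSystem V C D) (Xv1 Xv2 : Finset V) (Cv1 Cv2 : Finset C)
    (p : ((C → ℕ) × (C → ℕ)) × ((C → ℕ) × (C → ℕ))) : Set (V → D) :=
  { τ | ∃ τ1 τ2 : V → D,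
      S.HasShape Xv1 Cv1 p.1.1 p.1.2 τ1 ∧ S.HasShape Xv2 Cv2 p.2.1 p.2.2 τ2 ∧
      (∀ x ∈ Xv1, τ x = τ1 x) ∧ (∀ x ∈ Xv2, τ x = τ2 x) }

end SepSystem

namespace SepSystem

variable {V C D : Type} (S : SepSystem V C D)

section Satisfies

def Satisfies (c : C) (n : ℕ) : Prop :=
  (c ∈ S.Cin → n ∈ S.Γ c) ∧ (c ∈ S.Cge → S.γ c ≤ n)

variable {S} {c : C}

theorem Satisfies.le_γ {n : ℕ} (h : S.Satisfies c n) (hc : c ∈ S.Cin) : n ≤ S.γ c :=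
  S.gammaMax c hc n (h.1 hc)

theorem satisfies_congr {m n : ℕ} (hin : c ∈ S.Cin → m = n)
    (hmin : min m (S.γ c) = min n (S.γ c)) : S.Satisfies c m ↔ S.Satisfies c n := by
  unfold Satisfies
  constructor <;> rintro ⟨h1, h2⟩
  · exact ⟨fun hc => hin hc ▸ h1 hc, fun hc => by have := h2 hc; omega⟩
  · exact ⟨fun hc => (hin hc).symm ▸ h1 hc, fun hc => by have := h2 hc; omega⟩

/-- The parent sees `ψ + (a₁ + a₂)`; the first child sees its own part `a₁` and, as its outer
value, `ψ` plus the sibling's part `a₂`, both truncated at `γ`. For a `∈`-constraint the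
truncations must be inactive, which is what (L2*) records. -/
theorem satisfies_add_add_iff (ψ a₁ a₂ : ℕ) :
    S.Satisfies c (ψ + (a₁ + a₂)) ↔
      S.Satisfies c (min (ψ + min a₂ (S.γ c)) (S.γ c) + a₁) ∧
        (c ∈ S.Cin → a₂ ≤ S.γ c ∧ ψ + min a₂ (S.γ c) ≤ S.γ c) := by
  constructor
  · intro h
    refine ⟨(satisfies_congr (fun hc => ?_) (by omega)).1 h, fun hc => ?_⟩ <;>
    · have := h.le_γ hc
      omega
  · rintro ⟨h, hin⟩
    refine (satisfies_congr (fun hc => ?_) (by omega)).1 h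
    have := hin hc
    omega

end Satisfies

theorem cb_congr {X : Finset V} {τ τ' : V → D} (h : ∀ x ∈ X, τ x = τ' x) :
    S.cb X τ = S.cb X τ' :=
  funext fun _ => Finset.sum_congr rfl fun x hx => by rw [h x hx]

theorem cb_union [DecidableEq V] {X₁ X₂ : Finset V} (h : Disjoint X₁ X₂) (τ : V → D) (c : C) :
    S.cb (X₁ ∪ X₂) τ c = S.cb X₁ τ c + S.cb X₂ τ c :=
  Finset.sum_union h

theorem cb_compl_piecewise [DecidableEq V] [Fintype V] {X₁ X₂ : Finset V}
    (hX : Disjoint X₁ X₂) (τ σ : V → D) (c : C) :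
    S.cb X₁ᶜ (X₂.piecewise τ σ) c = S.cb X₂ τ c + S.cb (X₁ ∪ X₂)ᶜ σ c := by
  have hsplit : X₁ᶜ = X₂ ∪ (X₁ ∪ X₂)ᶜ := by
    ext x
    have : x ∈ X₂ → x ∉ X₁ := fun h => Finset.disjoint_right.1 hX h
    simp only [Finset.mem_compl, Finset.mem_union]
    tauto
  rw [cb, hsplit, Finset.sum_union (disjoint_compl_right.mono_left Finset.subset_union_right)]
  congr 1 <;> refine Finset.sum_congr rfl fun x hx => ?_
  · rw [Finset.piecewise_eq_of_mem _ _ _ hx]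
  · rw [Finset.piecewise_eq_of_notMem _ _ _ fun hx₂ =>
      Finset.mem_compl.1 hx (Finset.mem_union_right _ hx₂)]

section Shape

variable [DecidableEq C]

theorem apply_eq_zero_of_mem_proj {C' : Finset C} {X' : Finset V} {f : C → ℕ}
    (hf : f ∈ S.proj C' X') {c : C} (hc : c ∉ C') : f c = 0 := by
  obtain ⟨τ, rfl⟩ := hf
  simp [cdiv, hc]

variable [Fintype C]

theorem hasShape_iff {Xv : Finset V} {Cv : Finset C} {Φ Ψ : C → ℕ} {τ : V → D} :
    S.HasShape Xv Cv Φ Ψ τ ↔ ∀ c,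
      (c ∈ Cv → S.Satisfies c (Ψ c + S.cb Xv τ c)) ∧
      (c ∉ Cv → Φ c = min (S.cb Xv τ c) (S.γ c) ∧ (c ∈ S.Cin → S.cb Xv τ c ≤ S.γ c)) := by
  simp only [HasShape, Satisfies, Finset.mem_inter, Finset.mem_compl]
  constructor
  · rintro ⟨h1, h2, h3, h4⟩ c
    exact ⟨fun hc => ⟨fun hi => h3 c ⟨hc, hi⟩, fun hg => h4 c ⟨hc, hg⟩⟩,
      fun hc => ⟨h1 c hc, fun hi => h2 c ⟨hc, hi⟩⟩⟩
  · intro h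
    exact ⟨fun c hc => ((h c).2 hc).1, fun c hc => ((h c).2 hc.1).2 hc.2,
      fun c hc => ((h c).1 hc.1).1 hc.2, fun c hc => ((h c).1 hc.1).2 hc.2⟩

theorem hasShape_congr {Xv : Finset V} {Cv : Finset C} {Φ Ψ : C → ℕ} {τ τ' : V → D}
    (h : ∀ x ∈ Xv, τ x = τ' x) : S.HasShape Xv Cv Φ Ψ τ ↔ S.HasShape Xv Cv Φ Ψ τ' := by
  rw [HasShape, HasShape, S.cb_congr h]

theorem eq_cdiv_of_hasShape {Xv : Finset V} {Cv : Finset C} {Φ Ψ : C → ℕ} {τ : V → D}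
    (hΦ : Φ ∈ S.proj Cvᶜ Xv) (h : S.HasShape Xv Cv Φ Ψ τ) : Φ = S.cdiv Cvᶜ Xv τ := by
  funext c
  by_cases hc : c ∈ Cv
  · rw [S.apply_eq_zero_of_mem_proj hΦ (by simpa), cdiv, if_neg (by simpa)]
  · rw [((hasShape_iff S).1 h c).2 hc |>.1, cdiv, if_pos (by simpa)]

end Shape

section Children

variable [DecidableEq C] [Fintype C] {X₁ X₂ : Finset V} {C₁ C₂ : Finset C}

theorem mem_combSet_iff {p : ((C → ℕ) × (C → ℕ)) × ((C → ℕ) × (C → ℕ))} {τ : V → D} :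
    τ ∈ S.combSet X₁ X₂ C₁ C₂ p ↔
      S.HasShape X₁ C₁ p.1.1 p.1.2 τ ∧ S.HasShape X₂ C₂ p.2.1 p.2.2 τ := by
  constructor
  · rintro ⟨τ₁, τ₂, h₁, h₂, hτ₁, hτ₂⟩
    exact ⟨(S.hasShape_congr hτ₁).2 h₁, (S.hasShape_congr hτ₂).2 h₂⟩
  · rintro ⟨h₁, h₂⟩
    exact ⟨τ, τ, h₁, h₂, fun _ _ => rfl, fun _ _ => rfl⟩

/-- The shape `(Φ₁, Ψ₁)` that `τ` induces on the child `(X₁, C₁)` with sibling `(X₂, C₂)`: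
`Φ₁ = C̄₁/τ`, and `Ψ₁` is forced by (L2) once `Φ₂ = C̄₂/τ`. -/
def childShape (X₁ X₂ : Finset V) (C₁ C₂ : Finset C) (Ψ : C → ℕ) (τ : V → D) :
    (C → ℕ) × (C → ℕ) :=
  (S.cdiv C₁ᶜ X₁ τ, fun c => if c ∈ C₁ then min (Ψ c + S.cdiv C₂ᶜ X₂ τ c) (S.γ c) else 0)

variable [DecidableEq V]

theorem hasShape_childShape (hX : Disjoint X₁ X₂) (hC : Disjoint C₁ C₂) {Φ Ψ : C → ℕ}
    {τ : V → D} (h : S.HasShape (X₁ ∪ X₂) (C₁ ∪ C₂) Φ Ψ τ) :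
    S.HasShape X₁ C₁ (S.childShape X₁ X₂ C₁ C₂ Ψ τ).1 (S.childShape X₁ X₂ C₁ C₂ Ψ τ).2 τ := by
  rw [hasShape_iff] at h ⊢
  intro c
  have hc := h c
  rw [S.cb_union hX] at hc
  refine ⟨fun hc₁ => ?_, fun hc₁ => ⟨by simp [childShape, cdiv, hc₁], fun hin => ?_⟩⟩
  · have hc₂ : c ∉ C₂ := Finset.disjoint_left.1 hC hc₁
    simpa [childShape, cdiv, hc₁, hc₂] using
      ((S.satisfies_add_add_iff _ _ _).1 (hc.1 (Finset.mem_union_left _ hc₁))).1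
  · by_cases hc₂ : c ∈ C₂
    · have := (hc.1 (Finset.mem_union_right _ hc₂)).le_γ hin
      omega
    · have := (hc.2 (by simp [hc₁, hc₂])).2 hin
      omega

variable [Fintype V]

theorem childShape_snd_mem_proj (hX : Disjoint X₁ X₂) (hC : Disjoint C₁ C₂) {σ : V → D}
    {Ψ : C → ℕ} (hΨ : Ψ = S.cdiv (C₁ ∪ C₂) (X₁ ∪ X₂)ᶜ σ) (τ : V → D) :
    (S.childShape X₁ X₂ C₁ C₂ Ψ τ).2 ∈ S.proj C₁ X₁ᶜ := by
  refine ⟨X₂.piecewise τ σ, funext fun c => ?_⟩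
  by_cases hc : c ∈ C₁
  · have hc₂ : c ∉ C₂ := Finset.disjoint_left.1 hC hc
    simp only [childShape, cdiv, hΨ, hc, hc₂, Finset.mem_union, Finset.mem_compl, true_or,
      not_false_eq_true, if_true, S.cb_compl_piecewise hX]
    omega
  · simp [childShape, cdiv, hc]

theorem linked_childShape (hX : Disjoint X₁ X₂) (hC : Disjoint C₁ C₂) {Φ Ψ : C → ℕ}
    {σ τ : V → D} (hΦ : Φ ∈ S.proj (C₁ ∪ C₂)ᶜ (X₁ ∪ X₂))
    (hΨ : Ψ = S.cdiv (C₁ ∪ C₂) (X₁ ∪ X₂)ᶜ σ) (h : S.HasShape (X₁ ∪ X₂) (C₁ ∪ C₂) Φ Ψ τ) :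
    S.Linked X₁ X₂ C₁ C₂ Φ Ψ
      (S.childShape X₁ X₂ C₁ C₂ Ψ τ).1 (S.childShape X₁ X₂ C₁ C₂ Ψ τ).2
      (S.childShape X₂ X₁ C₂ C₁ Ψ τ).1 (S.childShape X₂ X₁ C₂ C₁ Ψ τ).2 := by
  have hΨ' : Ψ = S.cdiv (C₂ ∪ C₁) (X₂ ∪ X₁)ᶜ σ := by
    rwa [Finset.union_comm C₂, Finset.union_comm X₂]
  rw [hasShape_iff] at h
  have hcb := S.cb_union hX τ
  refine ⟨⟨σ, hΨ⟩, ⟨τ, rfl⟩, ⟨τ, rfl⟩, hΦ, S.childShape_snd_mem_proj hX hC hΨ τ,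
    S.childShape_snd_mem_proj hX.symm hC.symm hΨ' τ, fun c hc => ?_, fun c hc => ?_,
    fun c hc => ?_, fun c hc => ?_, fun c hc => by simp [childShape, hc],
    fun c hc => by simp [childShape, hc]⟩
  · obtain ⟨hc, hin⟩ := Finset.mem_inter.1 hc
    have := ((h c).2 (Finset.mem_compl.1 hc)).2 hin
    simp only [Finset.mem_compl, Finset.mem_union, not_or] at hc
    simp only [childShape, cdiv, Finset.mem_compl, hc, not_false_eq_true, if_true, hcb] at this ⊢
    omega
  · obtain ⟨hc₁, hin⟩ := Finset.mem_inter.1 hc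
    have := ((h c).1 (Finset.mem_union_left _ hc₁)).le_γ hin
    simp only [childShape, cdiv, Finset.mem_compl, Finset.disjoint_left.1 hC hc₁,
      not_false_eq_true, if_true, hcb] at this ⊢
    omega
  · obtain ⟨hc₂, hin⟩ := Finset.mem_inter.1 hc
    have := ((h c).1 (Finset.mem_union_right _ hc₂)).le_γ hin
    simp only [childShape, cdiv, Finset.mem_compl, Finset.disjoint_right.1 hC hc₂,
      not_false_eq_true, if_true, hcb] at this ⊢
    omega
  · have := ((h c).2 (Finset.mem_compl.1 hc)).1
    simp only [Finset.mem_compl, Finset.mem_union, not_or] at hc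
    simp only [childShape, cdiv, Finset.mem_compl, hc, not_false_eq_true, if_true, hcb] at this ⊢
    omega

theorem childShape_eq_of_hasShape {Φ₁ Ψ₁ Φ₂ Ψ : C → ℕ} {τ : V → D}
    (hΦ₁ : Φ₁ ∈ S.proj C₁ᶜ X₁) (hΨ₁ : Ψ₁ ∈ S.proj C₁ X₁ᶜ)
    (hL : ∀ c ∈ C₁, Ψ₁ c = min (Ψ c + Φ₂ c) (S.γ c)) (hΦ₂ : Φ₂ = S.cdiv C₂ᶜ X₂ τ)
    (h : S.HasShape X₁ C₁ Φ₁ Ψ₁ τ) : (Φ₁, Ψ₁) = S.childShape X₁ X₂ C₁ C₂ Ψ τ := by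
  refine Prod.ext (S.eq_cdiv_of_hasShape hΦ₁ h) (funext fun c => ?_)
  by_cases hc : c ∈ C₁
  · simp [childShape, hc, hL c hc, hΦ₂]
  · simp [childShape, hc, S.apply_eq_zero_of_mem_proj hΨ₁ hc]

theorem eq_childShape_of_linked {Φ Ψ : C → ℕ} {τ : V → D}
    {p : ((C → ℕ) × (C → ℕ)) × ((C → ℕ) × (C → ℕ))}
    (hp : S.Linked X₁ X₂ C₁ C₂ Φ Ψ p.1.1 p.1.2 p.2.1 p.2.2)
    (hτ : τ ∈ S.combSet X₁ X₂ C₁ C₂ p) :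
    p = (S.childShape X₁ X₂ C₁ C₂ Ψ τ, S.childShape X₂ X₁ C₂ C₁ Ψ τ) := by
  obtain ⟨-, hΦ₁, hΦ₂, -, hΨ₁, hΨ₂, -, -, -, -, hL₂, hL₃⟩ := hp
  obtain ⟨h₁, h₂⟩ := S.mem_combSet_iff.1 hτ
  exact Prod.ext (S.childShape_eq_of_hasShape hΦ₁ hΨ₁ hL₂ (S.eq_cdiv_of_hasShape hΦ₂ h₂) h₁)
    (S.childShape_eq_of_hasShape hΦ₂ hΨ₂ hL₃ (S.eq_cdiv_of_hasShape hΦ₁ h₁) h₂)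

theorem hasShape_of_linked (hX : Disjoint X₁ X₂) (hC : Disjoint C₁ C₂)
    {Φ Ψ Φ₁ Ψ₁ Φ₂ Ψ₂ : C → ℕ} {τ : V → D} (hL : S.Linked X₁ X₂ C₁ C₂ Φ Ψ Φ₁ Ψ₁ Φ₂ Ψ₂)
    (h₁ : S.HasShape X₁ C₁ Φ₁ Ψ₁ τ) (h₂ : S.HasShape X₂ C₂ Φ₂ Ψ₂ τ) :
    S.HasShape (X₁ ∪ X₂) (C₁ ∪ C₂) Φ Ψ τ := by
  obtain ⟨-, -, -, -, -, -, hL₁', hL₂', hL₃', hL₁, hL₂, hL₃⟩ := hL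
  rw [hasShape_iff] at h₁ h₂ ⊢
  intro c
  rw [S.cb_union hX]
  refine ⟨fun hc => ?_, fun hc => ?_⟩
  · rcases Finset.mem_union.1 hc with hc₁ | hc₂
    · obtain ⟨hΦ₂, ha₂⟩ := (h₂ c).2 (Finset.disjoint_left.1 hC hc₁)
      refine (S.satisfies_add_add_iff _ _ _).2 ⟨?_, fun hin => ⟨ha₂ hin, ?_⟩⟩
      · rw [← hΦ₂, ← hL₂ c hc₁]
        exact (h₁ c).1 hc₁
      · rw [← hΦ₂]
        exact hL₂' c (Finset.mem_inter.2 ⟨hc₁, hin⟩)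
    · obtain ⟨hΦ₁, ha₁⟩ := (h₁ c).2 (Finset.disjoint_right.1 hC hc₂)
      rw [add_comm (S.cb X₁ τ c)]
      refine (S.satisfies_add_add_iff _ _ _).2 ⟨?_, fun hin => ⟨ha₁ hin, ?_⟩⟩
      · rw [← hΦ₁, ← hL₃ c hc₂]
        exact (h₂ c).1 hc₂
      · rw [← hΦ₁]
        exact hL₃' c (Finset.mem_inter.2 ⟨hc₂, hin⟩)
  · have hcc := Finset.mem_compl.2 hc
    simp only [Finset.mem_union, not_or] at hc
    obtain ⟨hΦ₁, ha₁⟩ := (h₁ c).2 hc.1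
    obtain ⟨hΦ₂, ha₂⟩ := (h₂ c).2 hc.2
    refine ⟨by rw [hL₁ c hcc, hΦ₁, hΦ₂]; omega, fun hin => ?_⟩
    have := hL₁' c (Finset.mem_inter.2 ⟨hcc, hin⟩)
    have := ha₁ hin
    have := ha₂ hin
    omega

end Children

end SepSystem

/-- Proposition: for an inner vertex `v` with children `v1`, `v2` and a shape `(Φ,Ψ)`
for `v`, the set `X̂_v(Φ,Ψ)` of assignments of shape `(Φ,Ψ)` is the union, over all
pairs `P` of shapes for `v1`, `v2` forming with `(Φ,Ψ)` a triple of linked shapes, of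
the sets `{τ1 ∪ τ2 : τ1 ∈ X̂_{v1}(Φ1,Ψ1), τ2 ∈ X̂_{v2}(Φ2,Ψ2)}`, and this union is
disjoint. -/
theorem SepSystem.shape_decomposition {V C D : Type} [DecidableEq V] [DecidableEq C]
    [Fintype V] [Fintype C] (S : SepSystem V C D)
    (Xv1 Xv2 : Finset V) (Cv1 Cv2 : Finset C)
    (hX : Disjoint Xv1 Xv2) (hC : Disjoint Cv1 Cv2)
    (Φ Ψ : C → ℕ)
    (hΦ : Φ ∈ S.proj (Cv1 ∪ Cv2)ᶜ (Xv1 ∪ Xv2))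
    (hΨ : Ψ ∈ S.proj (Cv1 ∪ Cv2) (Xv1 ∪ Xv2)ᶜ) :
    ({ τ : V → D | S.HasShape (Xv1 ∪ Xv2) (Cv1 ∪ Cv2) Φ Ψ τ } =
      ⋃ p ∈ { p : ((C → ℕ) × (C → ℕ)) × ((C → ℕ) × (C → ℕ)) |
          S.Linked Xv1 Xv2 Cv1 Cv2 Φ Ψ p.1.1 p.1.2 p.2.1 p.2.2 },
        S.combSet Xv1 Xv2 Cv1 Cv2 p) ∧
    Set.PairwiseDisjoint
      { p : ((C → ℕ) × (C → ℕ)) × ((C → ℕ) × (C → ℕ)) |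
          S.Linked Xv1 Xv2 Cv1 Cv2 Φ Ψ p.1.1 p.1.2 p.2.1 p.2.2 }
      (S.combSet Xv1 Xv2 Cv1 Cv2) := by
  obtain ⟨σ, hσ⟩ := hΨ
  refine ⟨Set.ext fun τ => ⟨fun hτ => ?_, fun hτ => ?_⟩, fun p hp q hq hpq => ?_⟩
  · have hτ' : S.HasShape (Xv2 ∪ Xv1) (Cv2 ∪ Cv1) Φ Ψ τ := by
      rwa [Finset.union_comm Xv2, Finset.union_comm Cv2]
    exact Set.mem_biUnion
      (x := (S.childShape Xv1 Xv2 Cv1 Cv2 Ψ τ, S.childShape Xv2 Xv1 Cv2 Cv1 Ψ τ))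
      (S.linked_childShape hX hC hΦ hσ hτ) (S.mem_combSet_iff.2
      ⟨S.hasShape_childShape hX hC hτ, S.hasShape_childShape hX.symm hC.symm hτ'⟩)
  · obtain ⟨p, hp, hτ⟩ := Set.mem_iUnion₂.1 hτ
    obtain ⟨h₁, h₂⟩ := S.mem_combSet_iff.1 hτ
    exact S.hasShape_of_linked hX hC hp h₁ h₂
  · exact Set.disjoint_left.2 fun _ hτp hτq =>
      hpq ((S.eq_childShape_of_linked hp hτp).trans (S.eq_childShape_of_linked hq hτq).symm)
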